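/- arXiv:1201.4243 — 4 statements merged into one kernel-verified Lean document; each statement's English description precedes it below -/
import Mathlib

section
/- Let n and p be positive integers with n(n−1) ≤ p and p ≤ n!. Then, as real numbers, C(p+n−1, n) ≤ exp(1/2) · p^{n−1}. (In particular, under these hypotheses the expected number of keys k in Lemma 1 is bounded by √e.) -/
open Finset in
lemma ascFactorial_prod (p n : ℕ) :
    (p.ascFactorial n : ℝ) = ∏ i ∈ Finset.range n, ((p : ℝ) + i) := by
  induction n with
  | zero => simp
  | succ k ih =>
      rw [Nat.ascFactorial_succ, Finset.prod_range_succ, ← ih]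
      push_cast
      ring

/-- For positive integers `n, p` with `n(n-1) ≤ p` and `p ≤ n!`, as real numbers,
`C(p+n-1, n) ≤ exp(1/2) · p^(n-1)`. -/
theorem stmt_4 (n p : ℕ) (hn : 1 ≤ n) (hp : 1 ≤ p)
    (h1 : n * (n - 1) ≤ p) (h2 : p ≤ n.factorial) :
    ((p + n - 1).choose n : ℝ) ≤ Real.exp (1 / 2) * (p : ℝ) ^ (n - 1) := by
  have hp0 : (0 : ℝ) < p := by exact_mod_cast hp
  have key : (p.ascFactorial n : ℝ) = n.factorial * (p + n - 1).choose n := by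
    exact_mod_cast congrArg (Nat.cast : ℕ → ℝ)
      (Nat.ascFactorial_eq_factorial_mul_choose' p n)
  -- bound each factor: p + i ≤ p * exp (i / p)
  have hprod : (p.ascFactorial n : ℝ) ≤ (p : ℝ) ^ n * Real.exp (1 / 2) := by
    rw [ascFactorial_prod]
    calc ∏ i ∈ Finset.range n, ((p : ℝ) + i)
        ≤ ∏ i ∈ Finset.range n, ((p : ℝ) * Real.exp (i / p)) := by
          apply Finset.prod_le_prod
          · intro i _; positivity
          · intro i _
            have h := Real.add_one_le_exp ((i : ℝ) / p)
            calc (p : ℝ) + i = p * ((i : ℝ) / p + 1) := by field_simp; ring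
              _ ≤ p * Real.exp ((i : ℝ) / p) := by
                  apply mul_le_mul_of_nonneg_left h (le_of_lt hp0)
      _ = (p : ℝ) ^ n * Real.exp (∑ i ∈ Finset.range n, (i : ℝ) / p) := by
          rw [Finset.prod_mul_distrib, Finset.prod_const, Real.exp_sum]
          simp [Finset.card_range]
      _ ≤ (p : ℝ) ^ n * Real.exp (1 / 2) := by
          apply mul_le_mul_of_nonneg_left _ (by positivity)
          apply Real.exp_le_exp.mpr
          have hsum : ∑ i ∈ Finset.range n, (i : ℝ) / p
              = (n * (n - 1) / 2 : ℕ) / p := by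
            rw [← Finset.sum_div]
            congr 1
            rw [← Nat.cast_sum]
            congr 1
            rw [Finset.sum_range_id]
          rw [hsum]
          rw [div_le_div_iff₀ hp0 (by norm_num)]
          have : ((n * (n - 1) / 2 : ℕ) : ℝ) * 2 ≤ (n * (n - 1) : ℕ) := by
            have := Nat.div_mul_le_self (n * (n - 1)) 2
            exact_mod_cast this
          calc ((n * (n - 1) / 2 : ℕ) : ℝ) * 2 ≤ (n * (n - 1) : ℕ) := this
            _ ≤ p := by exact_mod_cast h1
            _ = 1 * (p : ℝ) := by ring
  -- now divide
  have hfact : (0 : ℝ) < n.factorial := by exact_mod_cast n.factorial_pos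
  rw [key] at hprod
  have hpow : (p : ℝ) ^ n = (p : ℝ) ^ (n - 1) * p := by
    rw [← pow_succ]
    congr 1
    omega
  have hfinal : (n.factorial : ℝ) * (p + n - 1).choose n
      ≤ (p : ℝ) ^ (n - 1) * Real.exp (1 / 2) * n.factorial := by
    calc (n.factorial : ℝ) * (p + n - 1).choose n
        ≤ (p : ℝ) ^ n * Real.exp (1 / 2) := hprod
      _ = (p : ℝ) ^ (n - 1) * Real.exp (1 / 2) * p := by rw [hpow]; ring
      _ ≤ (p : ℝ) ^ (n - 1) * Real.exp (1 / 2) * n.factorial := by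
          apply mul_le_mul_of_nonneg_left _ (by positivity)
          exact_mod_cast h2
  exact le_of_mul_le_mul_right
    (by nlinarith [hfinal] : ((p + n - 1).choose n : ℝ) * n.factorial
      ≤ (Real.exp (1 / 2) * (p : ℝ) ^ (n - 1)) * n.factorial) hfact
end

section
/- Let p be a prime and n an integer with 1 ≤ n ≤ p. Let s and t be multisets of cardinality n with elements in F_p. Then the power sums of s and t of all orders i = 1, …, n−1 agree (i.e., Σ_{x∈s} x^i = Σ_{x∈t} x^i for 1 ≤ i ≤ n−1, sums with multiplicity) if and only if the elementary symmetric functions of s and t of all orders i = 1, …, n−1 agree (i.e., e_i(s) = e_i(t) for 1 ≤ i ≤ n−1). -/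
open Finset MvPolynomial in
private lemma newton1 {R : Type*} [CommRing R] {n : ℕ} (f : Fin n → R) (k : ℕ) :
    (k : R) * (univ.val.map f).esymm k =
      (-1) ^ (k + 1) * ∑ a ∈ (antidiagonal k).filter (fun a => a.1 < k),
        (-1) ^ a.1 * (univ.val.map f).esymm a.1 * ∑ j, f j ^ a.2 := by
  have h := congrArg (aeval f) (mul_esymm_eq_sum (Fin n) R k)
  simp only [map_mul, map_sub, map_sum, map_pow, map_neg, map_one, map_natCast,
    aeval_esymm_eq_multiset_esymm] at h
  simpa [psum, aeval_esymm_eq_multiset_esymm] using h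

open Finset MvPolynomial in
private lemma newton2 {R : Type*} [CommRing R] {n : ℕ} (f : Fin n → R) (k : ℕ) (h : 0 < k) :
    (∑ j, f j ^ k) =
      (-1) ^ (k + 1) * k * (univ.val.map f).esymm k -
      ∑ a ∈ (antidiagonal k).filter (fun a => a.1 ∈ Set.Ioo 0 k),
        (-1) ^ a.1 * (univ.val.map f).esymm a.1 * ∑ j, f j ^ a.2 := by
  have h := congrArg (aeval f) (psum_eq_mul_esymm_sub_sum (Fin n) R k h)
  simp only [map_mul, map_sub, map_sum, map_pow, map_neg, map_one, map_natCast,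
    aeval_esymm_eq_multiset_esymm] at h
  simpa [psum, aeval_esymm_eq_multiset_esymm] using h

private lemma exists_fn {α : Type*} {n : ℕ} (s : Multiset α) (h : Multiset.card s = n) :
    ∃ f : Fin n → α, Finset.univ.val.map f = s := by
  have hl : s.toList.length = n := by simpa using h
  subst hl
  exact ⟨s.toList.get, by rw [Fin.univ_val_map, List.ofFn_get]; exact s.coe_toList⟩

/-- Let `p` be prime, `1 ≤ n ≤ p`, and `s, t` multisets of cardinality `n` over `F_p`.
The power sums of `s` and `t` of all orders `1, …, n-1` agree iff the elementary
symmetric functions of `s` and `t` of all orders `1, …, n-1` agree. -/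
theorem stmt_6 (p : ℕ) [Fact p.Prime] (n : ℕ) (hn : 1 ≤ n) (hnp : n ≤ p)
    (s t : Multiset (ZMod p)) (hs : Multiset.card s = n) (ht : Multiset.card t = n) :
    (∀ i, 1 ≤ i → i ≤ n - 1 →
        (s.map (fun x => x ^ i)).sum = (t.map (fun x => x ^ i)).sum) ↔
      (∀ i, 1 ≤ i → i ≤ n - 1 → s.esymm i = t.esymm i) := by
  obtain ⟨f, hf⟩ := exists_fn s hs
  obtain ⟨g, hg⟩ := exists_fn t ht
  subst hf hg
  have hconv : ∀ (f : Fin n → ZMod p) (m : ℕ),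
      ((Finset.univ.val.map f).map (fun x => x ^ m)).sum = ∑ j, f j ^ m := by
    intro f m; rw [Multiset.map_map]; rfl
  have hklt : ∀ k : ℕ, k ≤ n - 1 → (k : ZMod p) ≠ 0 ∨ k = 0 := by
    intro k hk
    rcases Nat.eq_zero_or_pos k with rfl | hk0
    · exact Or.inr rfl
    · left
      have hkp : k < p := by omega
      intro h0
      rw [ZMod.natCast_eq_zero_iff] at h0
      exact absurd (Nat.le_of_dvd hk0 h0) (by omega)
  constructor
  · intro h
    have key : ∀ k, k ≤ n - 1 →
        (Finset.univ.val.map f).esymm k = (Finset.univ.val.map g).esymm k := by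
      intro k
      induction k using Nat.strong_induction_on with
      | _ k ih =>
        intro hk
        rcases hklt k hk with hkp | rfl
        · apply mul_left_cancel₀ hkp
          rw [newton1 f k, newton1 g k]
          congr 1
          apply Finset.sum_congr rfl
          intro a ha
          simp only [Finset.mem_filter, Finset.HasAntidiagonal.mem_antidiagonal] at ha
          rw [ih a.1 ha.2 (le_trans (Nat.le_of_lt ha.2) hk)]
          have ha2 : 1 ≤ a.2 ∧ a.2 ≤ n - 1 := by omega
          rw [← hconv f a.2, ← hconv g a.2, h a.2 ha2.1 ha2.2]
        · simp [Multiset.esymm]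
    exact fun i _ h2 => key i h2
  · intro h
    have key : ∀ k, 1 ≤ k → k ≤ n - 1 → (∑ j, f j ^ k) = ∑ j, g j ^ k := by
      intro k
      induction k using Nat.strong_induction_on with
      | _ k ih =>
        intro hk1 hk
        rw [newton2 f k hk1, newton2 g k hk1, h k hk1 hk]
        congr 1
        apply Finset.sum_congr rfl
        intro a ha
        simp only [Finset.mem_filter, Finset.HasAntidiagonal.mem_antidiagonal, Set.mem_Ioo] at ha
        rw [h a.1 ha.2.1 (by omega), ih a.2 (by omega) (by omega) (by omega)]
    intro i h1 h2
    rw [hconv f i, hconv g i]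
    exact key i h1 h2
end

section
/- For every integer n ≥ 1, there exists a real number c ∈ [0, 1] such that e·((n+c)/e)^{n+c} = n!. -/
open Real

private lemma key_left (m : ℕ) (hm : 1 ≤ m) :
    (((m:ℝ)+1)/m) ^ m ≤ Real.exp 1 := by
  have hm0 : (0:ℝ) < m := by exact_mod_cast hm
  have h1 : ((m:ℝ)+1)/m = 1 + 1/m := by field_simp
  have h2 : (1 + 1/(m:ℝ)) ≤ Real.exp (1/m) := by
    have := Real.add_one_le_exp (1/(m:ℝ)); linarith
  calc (((m:ℝ)+1)/m) ^ m = (1 + 1/(m:ℝ)) ^ m := by rw [h1]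
    _ ≤ (Real.exp (1/m)) ^ m := by
        apply pow_le_pow_left₀ (by positivity) h2
    _ = Real.exp 1 := by
        rw [← Real.exp_nat_mul]; congr 1; field_simp

private lemma key_right (m : ℕ) (hm : 1 ≤ m) :
    Real.exp 1 ≤ (((m:ℝ)+1)/m) ^ (m+1) := by
  have hm0 : (0:ℝ) < m := by exact_mod_cast hm
  have hb : (0:ℝ) < ((m:ℝ)+1)/m := by positivity
  have hlog : 1/((m:ℝ)+1) ≤ Real.log (((m:ℝ)+1)/m) := by
    have h := Real.log_le_sub_one_of_pos (x := (m:ℝ)/((m:ℝ)+1)) (by positivity)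
    have : Real.log ((m:ℝ)/((m:ℝ)+1)) = - Real.log (((m:ℝ)+1)/m) := by
      rw [← Real.log_inv]; congr 1; field_simp
    rw [this] at h
    have : (m:ℝ)/((m:ℝ)+1) - 1 = -(1/((m:ℝ)+1)) := by field_simp; ring
    linarith [h, this ▸ h]
  have : Real.exp 1 ≤ Real.exp ((m+1) * Real.log (((m:ℝ)+1)/m)) := by
    apply Real.exp_le_exp.2
    have hm1 : (0:ℝ) < (m:ℝ)+1 := by positivity
    calc (1:ℝ) = ((m:ℝ)+1) * (1/((m:ℝ)+1)) := by field_simp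
      _ ≤ ((m:ℝ)+1) * Real.log (((m:ℝ)+1)/m) := by
          apply mul_le_mul_of_nonneg_left hlog (le_of_lt hm1)
      _ = _ := by push_cast; ring
  calc Real.exp 1 ≤ Real.exp ((m+1) * Real.log (((m:ℝ)+1)/m)) := this
    _ = (((m:ℝ)+1)/m) ^ ((m:ℕ)+1) := by
        rw [show ((m:ℝ)+1) = (((m+1:ℕ)):ℝ) by push_cast; ring, ← Real.log_pow,
          Real.exp_log (by positivity)]

private lemma lemA : ∀ n : ℕ, 1 ≤ n → (n:ℝ)^n ≤ (n.factorial : ℝ) * (Real.exp 1)^(n-1)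
  | 1, _ => by norm_num
  | (n+2), _ => by
    have hn1 : 1 ≤ n+1 := Nat.le_add_left 1 n
    have ih := lemA (n+1) hn1
    have hkey := key_left (n+1) hn1
    have hE : (0:ℝ) < Real.exp 1 := Real.exp_pos 1
    have hpos : (0:ℝ) < (n:ℝ)+1 := by positivity
    have h1 : ((n:ℝ)+2)^(n+1) ≤ Real.exp 1 * ((n:ℝ)+1)^(n+1) := by
      have : ((n:ℝ)+2)^(n+1) = ((((n:ℝ)+1)+1)/((n:ℝ)+1))^(n+1) * ((n:ℝ)+1)^(n+1) := by
        rw [← mul_pow]; congr 1; field_simp; ring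
      rw [this]
      apply mul_le_mul_of_nonneg_right _ (by positivity)
      have := key_left (n+1) hn1
      push_cast at this ⊢
      linarith
    have hcast : ((n:ℝ)+1+1) = ((n:ℝ)+2) := by ring
    calc ((n+2:ℕ):ℝ)^(n+2) = ((n:ℝ)+2)^(n+1) * ((n:ℝ)+2) := by push_cast; ring
      _ ≤ Real.exp 1 * ((n:ℝ)+1)^(n+1) * ((n:ℝ)+2) := by
          apply mul_le_mul_of_nonneg_right h1 (by positivity)
      _ ≤ Real.exp 1 * (((n+1).factorial : ℝ) * (Real.exp 1)^n) * ((n:ℝ)+2) := by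
          apply mul_le_mul_of_nonneg_right _ (by positivity)
          apply mul_le_mul_of_nonneg_left _ (le_of_lt hE)
          simpa using ih
      _ = (((n+2).factorial : ℝ)) * (Real.exp 1)^(n+1) := by
          rw [Nat.factorial_succ (n+1)]; push_cast; ring

private lemma lemB : ∀ n : ℕ, 1 ≤ n → (n.factorial : ℝ) * (Real.exp 1)^n ≤ ((n:ℝ)+1)^(n+1)
  | 1, _ => by
    have := Real.exp_one_lt_d9
    norm_num
    nlinarith [Real.exp_pos 1]
  | (n+2), _ => by
    have hn1 : 1 ≤ n+1 := Nat.le_add_left 1 n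
    have ih := lemB (n+1) hn1
    have hkey := key_right (n+2) (by omega)
    have hE : (0:ℝ) < Real.exp 1 := Real.exp_pos 1
    have h2 : Real.exp 1 * ((n:ℝ)+2)^(n+3) ≤ ((n:ℝ)+3)^(n+3) := by
      have heq : ((n:ℝ)+3)^(n+3) = ((((n:ℝ)+2)+1)/((n:ℝ)+2))^(n+3) * ((n:ℝ)+2)^(n+3) := by
        rw [← mul_pow]; congr 1; field_simp; ring
      rw [heq]
      apply mul_le_mul_of_nonneg_right _ (by positivity)
      push_cast at hkey ⊢
      linarith
    calc ((n+2).factorial : ℝ) * (Real.exp 1)^(n+2)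
        = ((n:ℝ)+2) * Real.exp 1 * (((n+1).factorial : ℝ) * (Real.exp 1)^(n+1)) := by
          rw [Nat.factorial_succ (n+1)]; push_cast; ring
      _ ≤ ((n:ℝ)+2) * Real.exp 1 * (((n:ℝ)+2)^(n+2)) := by
          apply mul_le_mul_of_nonneg_left _ (by positivity)
          exact le_of_le_of_eq ih (by push_cast; ring)
      _ = Real.exp 1 * ((n:ℝ)+2)^(n+3) := by ring
      _ ≤ ((n:ℝ)+3)^(n+3) := h2
      _ = (((n+2:ℕ):ℝ)+1)^(n+2+1) := by push_cast; ring

/-- For every integer `n ≥ 1`, there exists `c ∈ [0,1]` with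
`e·((n+c)/e)^(n+c) = n!`, where the power is the real power. -/
theorem stmt_10 (n : ℕ) (hn : 1 ≤ n) :
    ∃ c ∈ Set.Icc (0 : ℝ) 1,
      Real.exp 1 * (((n : ℝ) + c) / Real.exp 1) ^ ((n : ℝ) + c) = (n.factorial : ℝ) := by
  set E := Real.exp 1 with hEdef
  have hE : (0:ℝ) < E := Real.exp_pos 1
  have hn0 : (0:ℝ) < n := by exact_mod_cast hn
  set f : ℝ → ℝ := fun c => E * (((n : ℝ) + c) / E) ^ ((n : ℝ) + c) with hf
  have hcont : ContinuousOn f (Set.Icc 0 1) := by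
    apply ContinuousOn.mul continuousOn_const
    apply ContinuousOn.rpow
    · exact ((continuous_const.add continuous_id).div_const E).continuousOn
    · exact (continuous_const.add continuous_id).continuousOn
    · intro x hx
      left
      have : (0:ℝ) ≤ x := hx.1
      positivity
  -- f 0 ≤ n!
  have hf0 : f 0 ≤ (n.factorial : ℝ) := by
    have h1 : f 0 = E * ((n:ℝ)/E) ^ (n:ℕ) := by
      simp only [hf, add_zero]
      rw [← Real.rpow_natCast ((n:ℝ)/E) n]
    have hA := lemA n hn
    rw [h1, div_pow]
    rw [← mul_div_assoc, div_le_iff₀ (by positivity)]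
    have hEpow : E^(n:ℕ) = E^(n-1) * E := by
      conv_lhs => rw [← Nat.succ_pred_eq_of_pos (by omega : 0 < n)]
      rw [pow_succ]
      rfl
    calc E * (n:ℝ)^n ≤ E * ((n.factorial:ℝ) * E^(n-1)) := by
          apply mul_le_mul_of_nonneg_left hA (le_of_lt hE)
      _ = (n.factorial:ℝ) * (E^(n-1) * E) := by ring
      _ = (n.factorial:ℝ) * E^(n:ℕ) := by rw [← hEpow]
  -- n! ≤ f 1
  have hf1 : (n.factorial : ℝ) ≤ f 1 := by
    have h1 : f 1 = E * (((n:ℝ)+1)/E) ^ ((n:ℕ)+1) := by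
      simp only [hf]
      rw [← Real.rpow_natCast (((n:ℝ)+1)/E) (n+1)]
      push_cast
      ring_nf
    have hB := lemB n hn
    rw [h1, div_pow]
    rw [← mul_div_assoc, le_div_iff₀ (by positivity)]
    calc (n.factorial:ℝ) * E^((n:ℕ)+1) = (n.factorial:ℝ) * E^(n:ℕ) * E := by rw [pow_succ]; ring
      _ ≤ ((n:ℝ)+1)^(n+1) * E := by
          apply mul_le_mul_of_nonneg_right hB (le_of_lt hE)
      _ = E * ((n:ℝ)+1)^(n+1) := by ring
  have := intermediate_value_Icc (by norm_num : (0:ℝ) ≤ 1) hcont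
  have hmem : (n.factorial : ℝ) ∈ Set.Icc (f 0) (f 1) := ⟨hf0, hf1⟩
  obtain ⟨c, hc, hfc⟩ := this hmem
  exact ⟨c, hc, hfc⟩
end

section
/- Let p be a prime and f a monic polynomial of degree n ≥ 1 over F_p. In F_p[Y][X], let g(X) = f(X) − Y and let r = (X^p − X) mod g = Σ_{i=0}^{n−1} c_i(Y) X^i be the remainder of monic division of X^p − X by g in X. Then for every i, the degree of c_i(Y) in Y is at most ⌊p/n⌋. -/
open Polynomial

private lemma sub_bound {R : Type*} [CommRing R] {n B j : ℕ} {x y : Polynomial R}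
    (hx : x ≠ 0 → n * x.natDegree + j ≤ B) (hy : y ≠ 0 → n * y.natDegree + j ≤ B) :
    x - y ≠ 0 → n * (x - y).natDegree + j ≤ B := by
  intro h
  rcases eq_or_ne x 0 with rfl | hx0
  · have := hy (by simpa using h)
    simpa using this
  rcases eq_or_ne y 0 with rfl | hy0
  · have := hx (by simpa using h)
    simpa using this
  have h1 := hx hx0
  have h2 := hy hy0
  have hm : (x - y).natDegree ≤ max x.natDegree y.natDegree := natDegree_sub_le x y
  rcases max_cases x.natDegree y.natDegree with ⟨he, _⟩ | ⟨he, _⟩ <;> rw [he] at hm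
  · have := Nat.mul_le_mul_left n hm
    omega
  · have := Nat.mul_le_mul_left n hm
    omega

private lemma key {R : Type*} [CommRing R] [Nontrivial R] (n B : ℕ) (hn : 1 ≤ n)
    (g : Polynomial (Polynomial R)) (hgm : g.Monic) (hgd : g.natDegree = n)
    (hgw : ∀ k, g.coeff k ≠ 0 → n * (g.coeff k).natDegree + k ≤ n) :
    ∀ d (a : Polynomial (Polynomial R)), a.natDegree ≤ d →
      (∀ j, a.coeff j ≠ 0 → n * (a.coeff j).natDegree + j ≤ B) →
      ∃ q r, r + g * q = a ∧ r.degree < g.degree ∧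
        (∀ j, r.coeff j ≠ 0 → n * (r.coeff j).natDegree + j ≤ B) := by
  have hg0 : g ≠ 0 := hgm.ne_zero
  have hgdeg : g.degree = (n : ℕ) := by
    rw [degree_eq_natDegree hg0, hgd]
  intro d
  induction d with
  | zero =>
    intro a ha hW
    by_cases hlt : a.degree < g.degree
    · exact ⟨0, a, by ring, hlt, hW⟩
    · exfalso
      push_neg at hlt
      have ha0 : a ≠ 0 := by
        intro h
        rw [h, degree_zero] at hlt
        simp [hgdeg] at hlt
      have : n ≤ a.natDegree := by
        have := natDegree_le_natDegree hlt
        omega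
      omega
  | succ d ih =>
    intro a ha hW
    by_cases hlt : a.degree < g.degree
    · exact ⟨0, a, by ring, hlt, hW⟩
    push_neg at hlt
    have ha0 : a ≠ 0 := by
      intro h
      rw [h, degree_zero] at hlt
      simp [hgdeg] at hlt
    set d0 := a.natDegree with hd0
    have hnd0 : n ≤ d0 := by
      have := natDegree_le_natDegree hlt
      omega
    set c := a.leadingCoeff with hc
    have hc0 : c ≠ 0 := by simpa [hc] using ha0
    set m := d0 - n with hm
    have hmn : m + n = d0 := by omega
    set s : Polynomial (Polynomial R) := (C c * g) * X ^ m with hs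
    -- degree and leading coefficient of s
    have hCcg_lead : (C c * g).leadingCoeff = c := by
      rw [leadingCoeff_mul' (by simp [hgm.leadingCoeff, hc0])]
      simp [hgm.leadingCoeff]
    have hCcg_deg : (C c * g).degree = (n : ℕ) := by
      rw [degree_mul' (by simp [hgm.leadingCoeff, hc0]), degree_C hc0, hgdeg]
      simp
    have hs_lead : s.leadingCoeff = c := by
      rw [hs, leadingCoeff_mul' (by simp [hCcg_lead, hc0])]
      simp [hCcg_lead]
    have hs_deg : s.degree = (d0 : ℕ) := by
      rw [hs, degree_mul' (by simp [hCcg_lead, hc0]), hCcg_deg, degree_X_pow]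
      exact_mod_cast (by omega : n + m = d0)
    set a' := a - s with ha'
    have hdeglt : a'.degree < a.degree := by
      apply degree_sub_lt _ ha0 (by rw [hs_lead])
      rw [hs_deg, degree_eq_natDegree ha0]
    have ha'd : a'.natDegree ≤ d := by
      rcases eq_or_ne a' 0 with h | h
      · simp [h]
      · have := natDegree_lt_natDegree h hdeglt
        omega
    -- weighted bound on a'
    have hlead_bound : n * c.natDegree + d0 ≤ B := by
      have : a.coeff d0 ≠ 0 := by
        rw [hd0]
        exact mt leadingCoeff_eq_zero.mp ha0 ∘ id
      have := hW d0 this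
      rw [hc, Polynomial.leadingCoeff]
      exact this
    have hW' : ∀ j, a'.coeff j ≠ 0 → n * (a'.coeff j).natDegree + j ≤ B := by
      intro j
      rw [ha', coeff_sub]
      apply sub_bound (hW j)
      intro hsj
      rw [hs, coeff_mul_X_pow'] at hsj ⊢
      by_cases hmj : m ≤ j
      · rw [if_pos hmj] at hsj ⊢
        set k := j - m with hk
        rw [coeff_C_mul] at hsj ⊢
        have hck : c ≠ 0 ∧ g.coeff k ≠ 0 := by
          constructor <;> intro h <;> simp [h] at hsj
        have h1 := hgw k hck.2
        have h2 : (c * g.coeff k).natDegree ≤ c.natDegree + (g.coeff k).natDegree :=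
          natDegree_mul_le
        have h3 := Nat.mul_le_mul_left n h2
        have h4 : n * (c.natDegree + (g.coeff k).natDegree)
            = n * c.natDegree + n * (g.coeff k).natDegree := Nat.mul_add n _ _
        have hj : j = m + k := by omega
        omega
      · rw [if_neg hmj] at hsj
        exact absurd rfl hsj
    obtain ⟨q', r', heq, hrdeg, hrW⟩ := ih a' ha'd hW'
    refine ⟨q' + C c * X ^ m, r', ?_, hrdeg, hrW⟩
    have : r' + g * (q' + C c * X ^ m) = (r' + g * q') + (C c * g) * X ^ m := by ring
    rw [this, heq, ha', hs]
    ring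

/-- Let `p` be prime and `f` monic of degree `n ≥ 1` over `F_p`. In `F_p[Y][X]`,
let `g(X) = f(X) - Y` and let `r = (X^p - X) %ₘ g = Σ_i c_i(Y) X^i`. Then every
coefficient `c_i(Y)` has degree at most `⌊p/n⌋` in `Y`. -/
theorem stmt_13 (p : ℕ) [Fact p.Prime] (n : ℕ) (hn : 1 ≤ n)
    (f : (ZMod p)[X]) (hf : f.Monic) (hfn : f.natDegree = n)
    (g r : Polynomial (Polynomial (ZMod p)))
    (hg : g = f.map (C : ZMod p →+* Polynomial (ZMod p)) - C X)
    (hr : r = (X ^ p - X : Polynomial (Polynomial (ZMod p))) %ₘ g) :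
    ∀ i, (r.coeff i).natDegree ≤ p / n := by
  have hp2 : 2 ≤ p := (Fact.out : p.Prime).two_le
  have hfC : (f.map (C : ZMod p →+* Polynomial (ZMod p))).Monic := hf.map _
  have hfCd : (f.map (C : ZMod p →+* Polynomial (ZMod p))).natDegree = n := by
    rw [natDegree_map_eq_of_injective (C_injective), hfn]
  have hfCdeg : (f.map (C : ZMod p →+* Polynomial (ZMod p))).degree = (n : ℕ) := by
    rw [degree_eq_natDegree hfC.ne_zero, hfCd]
  have hCXdeg : (C (X : (ZMod p)[X]) : Polynomial (Polynomial (ZMod p))).degree ≤ 0 :=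
    degree_C_le
  have hdlt : (C (X : (ZMod p)[X]) : Polynomial (Polynomial (ZMod p))).degree
      < (f.map (C : ZMod p →+* Polynomial (ZMod p))).degree := by
    apply lt_of_le_of_lt hCXdeg
    rw [hfCdeg]
    exact_mod_cast Nat.pos_of_ne_zero (by omega)
  have hgm : g.Monic := by
    rw [hg, sub_eq_add_neg]
    exact hfC.add_of_left (by rwa [degree_neg])
  have hgdeg : g.degree = (n : ℕ) := by
    rw [hg, degree_sub_eq_left_of_degree_lt hdlt, hfCdeg]
  have hgd : g.natDegree = n := natDegree_eq_of_degree_eq_some hgdeg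
  have hgw : ∀ k, g.coeff k ≠ 0 → n * (g.coeff k).natDegree + k ≤ n := by
    intro k hk
    rw [hg, coeff_sub, coeff_map] at hk ⊢
    rcases Nat.eq_zero_or_pos k with rfl | hkpos
    · rw [coeff_C_zero] at hk ⊢
      have h1 : ((C (f.coeff 0)) - (X : (ZMod p)[X])).natDegree ≤ 1 := by
        apply le_trans (natDegree_sub_le _ _)
        simp
      have := Nat.mul_le_mul_left n h1
      omega
    · rw [coeff_C, if_neg (by omega)] at hk ⊢
      have hfk : f.coeff k ≠ 0 := by
        intro h; rw [h] at hk; simp at hk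
      have hkle : k ≤ f.natDegree := le_natDegree_of_ne_zero hfk
      rw [sub_zero, natDegree_C]
      omega
  have hW : ∀ j, ((X ^ p - X : Polynomial (Polynomial (ZMod p))).coeff j ≠ 0 →
      n * ((X ^ p - X : Polynomial (Polynomial (ZMod p))).coeff j).natDegree + j ≤ p) := by
    intro j
    rw [coeff_sub]
    apply sub_bound
    · intro h
      rw [coeff_X_pow] at h ⊢
      have : j = p := by by_contra hc; rw [if_neg hc] at h; exact h rfl
      subst this
      simp
    · intro h
      have : j = 1 := by
        by_contra hc
        rw [coeff_X, if_neg (Ne.symm hc)] at h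
        exact h rfl
      subst this
      rw [coeff_X_one]
      simp
      omega
  obtain ⟨q', r', heq, hrdeg, hrW⟩ :=
    key n p hn g hgm hgd hgw (X ^ p - X : Polynomial (Polynomial (ZMod p))).natDegree
      (X ^ p - X) le_rfl hW
  have huniq := div_modByMonic_unique q' r' hgm ⟨heq, hrdeg⟩
  have hreq : r = r' := by rw [hr, huniq.2]
  intro i
  rw [hreq]
  rcases eq_or_ne (r'.coeff i) 0 with h | h
  · simp [h]
  · have := hrW i h
    rw [Nat.le_div_iff_mul_le (by omega), Nat.mul_comm]
    omega
end
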